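/- Let (C, d, U, D₁, D₂) be a Floer datum over a field Λ, with Ĉ, Č, C̄ and the maps i, j, p as defined in the context. Since ď ∘ i = 0, j ∘ ď = d̂ ∘ j, and p ∘ d̂ = 0, the maps i, j, p induce Λ-linear maps on homology i_* : C̄ → Ȟ, j_* : Ȟ → Ĥ, p_* : Ĥ → C̄, where Ĥ := ker d̂ / im d̂, Ȟ := ker ď / im ď, and the homology of (C̄, 0) is C̄ itself. These maps form an exact triangle: im i_* = ker j_* in Ȟ, im j_* = ker p_* in Ĥ, and im p_* = ker i_* in C̄. -/

import Mathlib

noncomputable section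

variable (Λ : Type*) (V : Type*) [Field Λ] [AddCommGroup V] [Module Λ V]

/-- A Floer datum over the field `Λ`. -/
structure FloerDatum where
  gr : ZMod 8 → Submodule Λ V
  internal : DirectSum.IsInternal gr
  d : V →ₗ[Λ] V
  U : V →ₗ[Λ] V
  D₁ : V →ₗ[Λ] Λ
  D₂ : Λ →ₗ[Λ] V
  d_mem : ∀ (i : ZMod 8), ∀ v ∈ gr i, d v ∈ gr (i - 1)
  U_mem : ∀ (i : ZMod 8), ∀ v ∈ gr i, U v ∈ gr (i - 4)
  D₁_vanish : ∀ (i : ZMod 8), i ≠ 1 → ∀ v ∈ gr i, D₁ v = 0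
  D₂_mem : ∀ a : Λ, D₂ a ∈ gr 4
  d_d : d ∘ₗ d = 0
  D₁_d : D₁ ∘ₗ d = 0
  d_D₂ : d ∘ₗ D₂ = 0
  U_rel : U ∘ₗ d - d ∘ₗ U + D₂ ∘ₗ D₁ = 0

variable {Λ V}
variable {W : Type*} [AddCommGroup W] [Module Λ W]
variable {M : Type*} [AddCommGroup M] [Module Λ M]

/-- `p = Σ aᵢ xⁱ ↦ Σ f i aᵢ`, as a linear map on polynomials. -/
def polySum (f : ℕ → (Λ →ₗ[Λ] W)) : Polynomial Λ →ₗ[Λ] W where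
  toFun p := p.sum fun i a => f i a
  map_add' p q :=
    Polynomial.sum_add_index p q _ (fun i => map_zero (f i)) (fun i b c => map_add (f i) b c)
  map_smul' a p := by
    show (a • p).sum (fun i b => f i b) = a • p.sum fun i b => f i b
    rw [Polynomial.sum_smul_index p a _ (fun i => map_zero (f i)),
      Polynomial.sum, Polynomial.sum, Finset.smul_sum]
    exact Finset.sum_congr rfl fun n _ => by rw [← smul_eq_mul, map_smul]

/-- The differential `d̂` on `Ĉ = C ⊕ Λ[x]`. -/
def hatd (F : FloerDatum Λ V) : (V × Polynomial Λ) →ₗ[Λ] (V × Polynomial Λ) :=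
  ((F.d ∘ₗ LinearMap.fst Λ V (Polynomial Λ))
    - (polySum fun i => (F.U ^ i) ∘ₗ F.D₂) ∘ₗ LinearMap.snd Λ V (Polynomial Λ)).prod 0

/-- The map `X̂(α, p) = (U α, D₁ α + x·p)` on `Ĉ`. -/
def hatX (F : FloerDatum Λ V) : (V × Polynomial Λ) →ₗ[Λ] (V × Polynomial Λ) :=
  (F.U ∘ₗ LinearMap.fst Λ V (Polynomial Λ)).prod
    ((Algebra.linearMap Λ (Polynomial Λ)) ∘ₗ F.D₁ ∘ₗ LinearMap.fst Λ V (Polynomial Λ)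
      + (LinearMap.mulLeft Λ (Polynomial.X : Polynomial Λ)) ∘ₗ LinearMap.snd Λ V (Polynomial Λ))

/-- Package a family of `Λ`-linear coefficient functionals into a linear map to power series.
We use `PowerSeries Λ` (in the variable `x⁻¹`) as a model for `x⁻¹Λ[[x⁻¹]]`: a power series `q`
represents the series `Σ_{n≥0} (coeff n q) x^{-(n+1)}`. -/
def toPS (c : ℕ → (M →ₗ[Λ] Λ)) : M →ₗ[Λ] PowerSeries Λ where
  toFun m := PowerSeries.mk fun n => c n m
  map_add' x y := by
    ext n
    simp [PowerSeries.coeff_mk]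
  map_smul' a x := by
    ext n
    simp [PowerSeries.coeff_mk]

/-- The differential `ď` on `Č = C ⊕ x⁻¹Λ[[x⁻¹]]`. -/
def checkd (F : FloerDatum Λ V) : (V × PowerSeries Λ) →ₗ[Λ] (V × PowerSeries Λ) :=
  (F.d ∘ₗ LinearMap.fst Λ V (PowerSeries Λ)).prod
    ((toPS fun n => F.D₁ ∘ₗ (F.U ^ n)) ∘ₗ LinearMap.fst Λ V (PowerSeries Λ))

/-- The map `X̌` on `Č`. -/
def checkX (F : FloerDatum Λ V) : (V × PowerSeries Λ) →ₗ[Λ] (V × PowerSeries Λ) :=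
  (F.U ∘ₗ LinearMap.fst Λ V (PowerSeries Λ)
      + F.D₂ ∘ₗ (PowerSeries.coeff (R := Λ) 0) ∘ₗ LinearMap.snd Λ V (PowerSeries Λ)).prod
    ((toPS fun n => PowerSeries.coeff (R := Λ) (n + 1)) ∘ₗ LinearMap.snd Λ V (PowerSeries Λ))

/-!
We model `C̄ = Λ((x⁻¹))` by `LaurentSeries Λ = HahnSeries ℤ Λ` in the variable `t = x⁻¹`;
a Laurent series `z` represents `Σ_i aᵢ xⁱ` with `aᵢ = z.coeff (-i)`, and `x` acts by
multiplication by `xbar = single (-1) 1`.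
-/

/-- The element `x` of `C̄ = Λ((x⁻¹))`. -/
def xbar : LaurentSeries Λ := HahnSeries.single (-1 : ℤ) (1 : Λ)

lemma headSupport_finite (f : ℕ → (Λ →ₗ[Λ] W)) (z : LaurentSeries Λ) :
    (Function.support fun n : ℕ => f n (z.coeff (-(n : ℤ)))).Finite := by
  have h1 : (z.support ∩ Set.Iic (0 : ℤ)).Finite := by
    rcases Set.eq_empty_or_nonempty (z.support ∩ Set.Iic (0 : ℤ)) with h | h
    · simp [h]
    · have hwf : (z.support ∩ Set.Iic (0 : ℤ)).IsWF :=
        z.isWF_support.mono Set.inter_subset_left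
      exact Set.Finite.subset (Set.finite_Icc (hwf.min h) 0)
        (fun y hy => Set.mem_Icc.mpr ⟨hwf.min_le h hy, hy.2⟩)
  have hinj : Function.Injective fun n : ℕ => -(n : ℤ) := fun a b hab => by
    simpa using hab
  refine Set.Finite.subset (Set.Finite.preimage (hinj.injOn) h1) ?_
  intro n hn
  have hz : z.coeff (-(n : ℤ)) ≠ 0 := by
    intro h0
    apply hn
    simp [h0]
  exact Set.mem_preimage.mpr ⟨hz, by simp⟩

/-- `z = Σ aᵢ xⁱ ↦ Σ_{i ≥ 0} f i aᵢ`, as a linear map on Laurent series (the sum is finite). -/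
def headMap (f : ℕ → (Λ →ₗ[Λ] W)) : LaurentSeries Λ →ₗ[Λ] W where
  toFun z := ∑ᶠ n : ℕ, f n (z.coeff (-(n : ℤ)))
  map_add' z w := by
    show (∑ᶠ n : ℕ, f n ((z + w).coeff (-(n : ℤ))))
        = (∑ᶠ n : ℕ, f n (z.coeff (-(n : ℤ)))) + ∑ᶠ n : ℕ, f n (w.coeff (-(n : ℤ)))
    rw [← finsum_add_distrib (headSupport_finite f z) (headSupport_finite f w)]
    exact finsum_congr fun n => by rw [HahnSeries.coeff_add, map_add]
  map_smul' a z := by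
    show (∑ᶠ n : ℕ, f n ((a • z).coeff (-(n : ℤ)))) = a • ∑ᶠ n : ℕ, f n (z.coeff (-(n : ℤ)))
    rw [smul_finsum]
    exact finsum_congr fun n => by rw [HahnSeries.coeff_smul, map_smul]

/-- The coefficient of `xⁱ` (i.e. of `t^{-i}`), as a linear functional on Laurent series. -/
def lcoeff (k : ℤ) : LaurentSeries Λ →ₗ[Λ] Λ where
  toFun z := z.coeff k
  map_add' _ _ := HahnSeries.coeff_add
  map_smul' _ _ := HahnSeries.coeff_smul

/-- A power series `q`, viewed as `Σ_{n≥0} (coeff n q) x^{-(n+1)}`, embedded into `Λ((x⁻¹))`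
(multiplying the usual embedding by `t = x⁻¹`). -/
def psToLaurentShift : PowerSeries Λ →ₗ[Λ] LaurentSeries Λ where
  toFun q := HahnSeries.single (1 : ℤ) (1 : Λ) * (HahnSeries.ofPowerSeries ℤ Λ q)
  map_add' q r := by
    show HahnSeries.single (1 : ℤ) (1 : Λ) * (HahnSeries.ofPowerSeries ℤ Λ (q + r))
        = HahnSeries.single (1 : ℤ) (1 : Λ) * (HahnSeries.ofPowerSeries ℤ Λ q)
          + HahnSeries.single (1 : ℤ) (1 : Λ) * (HahnSeries.ofPowerSeries ℤ Λ r)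
    rw [map_add, mul_add]
  map_smul' a q := by
    show HahnSeries.single (1 : ℤ) (1 : Λ) * (HahnSeries.ofPowerSeries ℤ Λ (a • q))
        = a • (HahnSeries.single (1 : ℤ) (1 : Λ) * HahnSeries.ofPowerSeries ℤ Λ q)
    rw [PowerSeries.smul_eq_C_mul, map_mul, HahnSeries.ofPowerSeries_C, HahnSeries.C_apply,
      mul_left_comm, HahnSeries.single_zero_mul_eq_smul]

/-- A polynomial `Σ aᵢ xⁱ`, viewed inside `Λ((x⁻¹))` by substituting `x = t⁻¹`. -/
def polyToLaurent : Polynomial Λ →ₗ[Λ] LaurentSeries Λ :=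
  polySum fun n => LinearMap.smulRight (LinearMap.id : Λ →ₗ[Λ] Λ) ((xbar : LaurentSeries Λ) ^ n)

/-- The map `i : C̄ → Č`. -/
def imap (F : FloerDatum Λ V) : LaurentSeries Λ →ₗ[Λ] (V × PowerSeries Λ) :=
  (headMap fun n => (F.U ^ n) ∘ₗ F.D₂).prod
    (toPS fun n => lcoeff ((n : ℤ) + 1))

/-- The map `j : Č → Ĉ`, `(α, q) ↦ (α, 0)`. -/
def jmap : (V × PowerSeries Λ) →ₗ[Λ] (V × Polynomial Λ) :=
  (LinearMap.fst Λ V (PowerSeries Λ)).prod 0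

/-- The map `p : Ĉ → C̄`,
`(α, Σ_{i≥0} aᵢ xⁱ) ↦ Σ_{i≤-1} D₁(U^{-i-1} α) xⁱ + Σ_{i≥0} aᵢ xⁱ`. -/
def pmap (F : FloerDatum Λ V) : (V × Polynomial Λ) →ₗ[Λ] LaurentSeries Λ :=
  (psToLaurentShift ∘ₗ (toPS fun n => F.D₁ ∘ₗ (F.U ^ n))) ∘ₗ LinearMap.fst Λ V (Polynomial Λ)
    + polyToLaurent ∘ₗ LinearMap.snd Λ V (Polynomial Λ)

/-- The homology `Ĥ = ker d̂ / im d̂`. -/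
abbrev HatHomology (F : FloerDatum Λ V) :=
  LinearMap.ker (hatd F) ⧸
    ((LinearMap.range (hatd F)).comap (LinearMap.ker (hatd F)).subtype)

/-- The homology `Ȟ = ker ď / im ď`. -/
abbrev CheckHomology (F : FloerDatum Λ V) :=
  LinearMap.ker (checkd F) ⧸
    ((LinearMap.range (checkd F)).comap (LinearMap.ker (checkd F)).subtype)

/-!
The triangle is a diagram chase that works for any module map `d : C → C` together with maps
`Φ : A → C`, `Ψ : C → B` satisfying `d Φ = 0`, `Ψ Φ = 0`, `Ψ d = 0`: with `Ĉ = C ⊕ A`,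
`d̂ (α, a) = (d α - Φ a, 0)`, `Č = C ⊕ B`, `ď (α, b) = (d α, Ψ α)` and `C̄ = A ⊕ B`, the maps are
`i (a, b) = (Φ a, b)`, `j (α, b) = (α, 0)` and `p (α, a) = (a, Ψ α)`. For a Floer datum,
`A = Λ[x]`, `B = x⁻¹Λ[[x⁻¹]]`, `Φ (Σ aᵢ xⁱ) = Σ Uⁱ (D₂ aᵢ)` and `Ψ α = Σ D₁ (Uⁿ α) x⁻ⁿ⁻¹`; the three
identities follow from `U d - d U + D₂ D₁ = 0` by induction on the power of `U`, together with
the grading, which forces `D₁ Uᵏ D₂ = 0`.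
-/

namespace LinearMap

variable {R M N : Type*} [Ring R] [AddCommGroup M] [Module R M] [AddCommGroup N] [Module R N]

abbrev homology (g : M →ₗ[R] M) : Type _ :=
  ker g ⧸ (range g).comap (ker g).subtype

def toHomology (g : N →ₗ[R] N) (i : M →ₗ[R] N) (h : g ∘ₗ i = 0) : M →ₗ[R] g.homology :=
  Submodule.mkQ _ ∘ₗ i.codRestrict (ker g) fun m => LinearMap.congr_fun h m

def fromHomology (g : M →ₗ[R] M) (p : M →ₗ[R] N) (h : p ∘ₗ g = 0) : g.homology →ₗ[R] N :=
  Submodule.liftQ _ (p ∘ₗ (ker g).subtype) <| by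
    rintro ⟨x, _⟩ ⟨y, hy : g y = x⟩
    subst hy
    exact LinearMap.congr_fun h y

def homologyMap (g : M →ₗ[R] M) (g' : N →ₗ[R] N) (f : M →ₗ[R] N) (h : g' ∘ₗ f = f ∘ₗ g) :
    g.homology →ₗ[R] g'.homology :=
  Submodule.mapQ _ _ (f.restrict fun x hx => by
      rw [mem_ker] at hx ⊢
      rw [← comp_apply, h, comp_apply, hx, map_zero]) <| by
    rintro ⟨x, _⟩ ⟨y, hy : g y = x⟩
    exact ⟨f y, (LinearMap.congr_fun h y).trans (congrArg f hy)⟩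

lemma toHomology_apply (g : N →ₗ[R] N) (i : M →ₗ[R] N) (h : g ∘ₗ i = 0) (m : M) :
    toHomology g i h m = Submodule.Quotient.mk ⟨i m, LinearMap.congr_fun h m⟩ :=
  rfl

lemma homologyMap_mk (g : M →ₗ[R] M) (g' : N →ₗ[R] N) (f : M →ₗ[R] N) (h : g' ∘ₗ f = f ∘ₗ g)
    (x : ker g) :
    homologyMap g g' f h (Submodule.Quotient.mk x) =
      Submodule.Quotient.mk ⟨f x, by rw [mem_ker, ← comp_apply, h, comp_apply, x.2, map_zero]⟩ :=
  rfl

variable (g : M →ₗ[R] M)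

lemma homology_mk_eq_zero_iff (x : ker g) :
    (Submodule.Quotient.mk x : g.homology) = 0 ↔ ∃ y, g y = x :=
  Submodule.Quotient.mk_eq_zero _

lemma homology_mk_eq_mk_iff (x y : ker g) :
    (Submodule.Quotient.mk x : g.homology) = Submodule.Quotient.mk y ↔ ∃ z, g z = x - y :=
  Submodule.Quotient.eq _

end LinearMap

open LinearMap

section MappingCone

variable {R C A B Z : Type*} [Ring R] [AddCommGroup C] [Module R C] [AddCommGroup A]
  [Module R A] [AddCommGroup B] [Module R B] [AddCommGroup Z] [Module R Z]
variable (d : C →ₗ[R] C) (Φ : A →ₗ[R] C) (Ψ : C →ₗ[R] B)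

def hatDiff : C × A →ₗ[R] C × A :=
  (d ∘ₗ fst R C A - Φ ∘ₗ snd R C A).prod 0

def checkDiff : C × B →ₗ[R] C × B :=
  (d ∘ₗ fst R C B).prod (Ψ ∘ₗ fst R C B)

@[simp]
lemma hatDiff_apply (α : C) (a : A) : hatDiff d Φ (α, a) = (d α - Φ a, 0) := rfl

@[simp]
lemma checkDiff_apply (α : C) (b : B) : checkDiff d Ψ (α, b) = (d α, Ψ α) := rfl

lemma hatDiff_comp_fst_prod_zero :
    hatDiff d Φ ∘ₗ (fst R C B).prod 0 = (fst R C B).prod 0 ∘ₗ checkDiff d Ψ :=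
  LinearMap.ext fun ⟨α, b⟩ => by simp

variable {d Φ Ψ} (e : (A × B) ≃ₗ[R] Z) {i : Z →ₗ[R] C × B} {p : C × A →ₗ[R] Z}

lemma checkDiff_comp_eq_zero (hdΦ : d ∘ₗ Φ = 0) (hΨΦ : Ψ ∘ₗ Φ = 0)
    (hi : ∀ a b, i (e (a, b)) = (Φ a, b)) : checkDiff d Ψ ∘ₗ i = 0 := by
  refine LinearMap.ext fun z => ?_
  obtain ⟨⟨a, b⟩, rfl⟩ := e.surjective z
  rw [comp_apply, hi, checkDiff_apply]
  exact Prod.ext (LinearMap.congr_fun hdΦ a) (LinearMap.congr_fun hΨΦ a)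

lemma comp_hatDiff_eq_zero (hΨd : Ψ ∘ₗ d = 0) (hΨΦ : Ψ ∘ₗ Φ = 0)
    (hp : ∀ α a, p (α, a) = e (a, Ψ α)) : p ∘ₗ hatDiff d Φ = 0 :=
  LinearMap.ext fun ⟨α, a⟩ => by
    have hΨdα : Ψ (d α) = 0 := LinearMap.congr_fun hΨd α
    have hΨΦa : Ψ (Φ a) = 0 := LinearMap.congr_fun hΨΦ a
    simp [hp, hΨdα, hΨΦa]

lemma range_toHomology_eq_ker_homologyMap (hi0 : checkDiff d Ψ ∘ₗ i = 0)
    (hi : ∀ a b, i (e (a, b)) = (Φ a, b)) :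
    range (toHomology _ i hi0) =
      ker (homologyMap _ (hatDiff d Φ) _ (hatDiff_comp_fst_prod_zero d Φ Ψ)) := by
  apply le_antisymm
  · rintro _ ⟨z, rfl⟩
    obtain ⟨⟨a, b⟩, rfl⟩ := e.surjective z
    rw [mem_ker, toHomology_apply, homologyMap_mk, homology_mk_eq_zero_iff]
    exact ⟨(0, -a), by simp [hi]⟩
  · intro η hη
    obtain ⟨⟨⟨α, b⟩, hαb⟩, rfl⟩ := Submodule.Quotient.mk_surjective _ η
    rw [mem_ker, homologyMap_mk, homology_mk_eq_zero_iff] at hη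
    obtain ⟨⟨β, Q⟩, hβ⟩ := hη
    have hα : d β - Φ Q = α := congrArg Prod.fst hβ
    refine ⟨e (-Q, b - Ψ β), ?_⟩
    rw [toHomology_apply, homology_mk_eq_mk_iff]
    exact ⟨(-β, 0), by simp [hi, ← hα]; abel⟩

lemma range_homologyMap_eq_ker_fromHomology (hp0 : p ∘ₗ hatDiff d Φ = 0)
    (hp : ∀ α a, p (α, a) = e (a, Ψ α)) :
    range (homologyMap _ (hatDiff d Φ) _ (hatDiff_comp_fst_prod_zero d Φ Ψ)) =
      ker (fromHomology _ p hp0) := by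
  apply le_antisymm
  · rintro _ ⟨θ, rfl⟩
    obtain ⟨⟨⟨α, b⟩, hαb⟩, rfl⟩ := Submodule.Quotient.mk_surjective _ θ
    simp only [mem_ker, checkDiff_apply, Prod.mk_eq_zero] at hαb
    show p (α, 0) = 0
    simp [hp, hαb.2]
  · intro η hη
    obtain ⟨⟨⟨α, a⟩, hαa⟩, rfl⟩ := Submodule.Quotient.mk_surjective _ η
    have hpa : e (a, Ψ α) = 0 := (hp α a).symm.trans hη
    simp only [LinearEquiv.map_eq_zero_iff, Prod.mk_eq_zero] at hpa
    obtain ⟨rfl, hΨα⟩ := hpa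
    simp only [mem_ker, hatDiff_apply, map_zero, sub_zero, Prod.mk_eq_zero] at hαa
    refine ⟨Submodule.Quotient.mk ⟨(α, 0), ?_⟩, rfl⟩
    simp [hαa.1, hΨα]

lemma range_fromHomology_eq_ker_toHomology (hi0 : checkDiff d Ψ ∘ₗ i = 0)
    (hp0 : p ∘ₗ hatDiff d Φ = 0) (hi : ∀ a b, i (e (a, b)) = (Φ a, b))
    (hp : ∀ α a, p (α, a) = e (a, Ψ α)) :
    range (fromHomology _ p hp0) = ker (toHomology _ i hi0) := by
  apply le_antisymm
  · rintro _ ⟨θ, rfl⟩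
    obtain ⟨⟨⟨α, a⟩, hαa⟩, rfl⟩ := Submodule.Quotient.mk_surjective _ θ
    simp only [mem_ker, hatDiff_apply, Prod.mk_eq_zero, sub_eq_zero] at hαa
    refine (homology_mk_eq_zero_iff _ _).mpr ⟨(α, 0), ?_⟩
    show _ = i (p (α, a))
    rw [hp, hi, checkDiff_apply, hαa.1]
  · intro z hz
    obtain ⟨⟨a, b⟩, rfl⟩ := e.surjective z
    rw [mem_ker, toHomology_apply, homology_mk_eq_zero_iff] at hz
    obtain ⟨⟨β, r⟩, hβ⟩ := hz
    simp only [hi, checkDiff_apply, Prod.mk.injEq] at hβ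
    refine ⟨Submodule.Quotient.mk ⟨(β, a), ?_⟩, ?_⟩
    · simp [hβ.1]
    · show p (β, a) = _
      rw [hp, hβ.2]

end MappingCone

lemma coeff_toPS (c : ℕ → (M →ₗ[Λ] Λ)) (m : M) (n : ℕ) :
    PowerSeries.coeff n (toPS c m) = c n m :=
  PowerSeries.coeff_mk n fun n => c n m

namespace FloerDatum

variable (F : FloerDatum Λ V)

lemma U_pow_mem {i : ZMod 8} {v : V} (hv : v ∈ F.gr i) (k : ℕ) :
    (F.U ^ k) v ∈ F.gr (i - 4 * k) := by
  induction k with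
  | zero => simpa using hv
  | succ k ih =>
    rw [pow_succ', Module.End.mul_apply, Nat.cast_succ, mul_add_one, ← sub_sub]
    exact F.U_mem _ _ ih

lemma D₁_U_pow_D₂ (k : ℕ) (a : Λ) : F.D₁ ((F.U ^ k) (F.D₂ a)) = 0 := by
  have hdeg : ∀ c : ZMod 8, 4 - 4 * c ≠ 1 := by decide
  exact F.D₁_vanish _ (hdeg k) _ (F.U_pow_mem (F.D₂_mem a) k)

lemma d_U_apply (v : V) : F.d (F.U v) = F.U (F.d v) + F.D₂ (F.D₁ v) := by
  have h := LinearMap.congr_fun F.U_rel v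
  simp only [LinearMap.add_apply, LinearMap.sub_apply, comp_apply, LinearMap.zero_apply] at h
  rw [← sub_eq_zero, ← neg_eq_zero, ← h]
  abel

lemma d_U_pow_D₂ (n : ℕ) (a : Λ) : F.d ((F.U ^ n) (F.D₂ a)) = 0 := by
  induction n with
  | zero => simpa using LinearMap.congr_fun F.d_D₂ a
  | succ n ih =>
    rw [pow_succ', Module.End.mul_apply, d_U_apply, ih, D₁_U_pow_D₂, map_zero, map_zero, zero_add]

lemma D₁_U_pow_d (n : ℕ) (v : V) : F.D₁ ((F.U ^ n) (F.d v)) = 0 := by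
  induction n generalizing v with
  | zero => simpa using LinearMap.congr_fun F.D₁_d v
  | succ n ih =>
    have hUd : F.U (F.d v) = F.d (F.U v) - F.D₂ (F.D₁ v) := by rw [d_U_apply]; abel
    rw [pow_succ, Module.End.mul_apply, hUd, map_sub, map_sub, ih, D₁_U_pow_D₂, sub_zero]

def polyD₂ : Polynomial Λ →ₗ[Λ] V :=
  polySum fun n => (F.U ^ n) ∘ₗ F.D₂

def seriesD₁ : V →ₗ[Λ] PowerSeries Λ :=
  toPS fun n => F.D₁ ∘ₗ (F.U ^ n)

lemma coeff_seriesD₁ (n : ℕ) (v : V) :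
    PowerSeries.coeff n (F.seriesD₁ v) = F.D₁ ((F.U ^ n) v) :=
  coeff_toPS _ v n

lemma polyD₂_apply (P : Polynomial Λ) :
    F.polyD₂ P = ∑ n ∈ P.support, (F.U ^ n) (F.D₂ (P.coeff n)) :=
  rfl

lemma d_comp_polyD₂ : F.d ∘ₗ F.polyD₂ = 0 :=
  LinearMap.ext fun P => by
    simp [polyD₂_apply, d_U_pow_D₂]

lemma seriesD₁_comp_polyD₂ : F.seriesD₁ ∘ₗ F.polyD₂ = 0 :=
  LinearMap.ext fun P => PowerSeries.ext fun m => by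
    simp [coeff_seriesD₁, polyD₂_apply, ← Module.End.mul_apply, ← pow_add, D₁_U_pow_D₂]

lemma seriesD₁_comp_d : F.seriesD₁ ∘ₗ F.d = 0 :=
  LinearMap.ext fun v => PowerSeries.ext fun m => by
    simp [coeff_seriesD₁, D₁_U_pow_d]

end FloerDatum

lemma polyToLaurent_monomial (n : ℕ) (a : Λ) :
    polyToLaurent (Polynomial.monomial n a) = HahnSeries.single (-(n : ℤ)) a := by
  ext k
  simp [polyToLaurent, polySum, xbar, HahnSeries.single_pow, HahnSeries.coeff_single]

lemma coeff_polyToLaurent_neg (P : Polynomial Λ) (n : ℕ) :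
    (polyToLaurent P).coeff (-(n : ℤ)) = P.coeff n := by
  induction P using Polynomial.induction_on' with
  | add P Q hP hQ => simp [hP, hQ]
  | monomial m a =>
    simp [polyToLaurent_monomial, HahnSeries.coeff_single, Polynomial.coeff_monomial, eq_comm]

lemma coeff_polyToLaurent_succ (P : Polynomial Λ) (n : ℕ) :
    (polyToLaurent P).coeff ((n : ℤ) + 1) = 0 := by
  induction P using Polynomial.induction_on' with
  | add P Q hP hQ => simp [hP, hQ]
  | monomial m a =>
    rw [polyToLaurent_monomial, HahnSeries.coeff_single_of_ne (by omega)]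

lemma coeff_psToLaurentShift_succ (q : PowerSeries Λ) (n : ℕ) :
    (psToLaurentShift q).coeff ((n : ℤ) + 1) = PowerSeries.coeff n q :=
  HahnSeries.coeff_single_mul_add.trans <| (one_mul _).trans <|
    HahnSeries.ofPowerSeries_apply_coeff q n

lemma coeff_psToLaurentShift_neg (q : PowerSeries Λ) (n : ℕ) :
    (psToLaurentShift q).coeff (-(n : ℤ)) = 0 := by
  have h := HahnSeries.coeff_single_mul_add (r := (1 : Λ)) (x := HahnSeries.ofPowerSeries ℤ Λ q)
    (a := -(n : ℤ) - 1) (b := 1)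
  rw [sub_add_cancel, one_mul, PowerSeries.coeff_coe, if_pos (by omega)] at h
  exact h

lemma LaurentSeries.ext_of_coeff_neg_of_coeff_succ {R : Type*} [Zero R] {z w : LaurentSeries R}
    (hneg : ∀ n : ℕ, z.coeff (-(n : ℤ)) = w.coeff (-(n : ℤ)))
    (hsucc : ∀ n : ℕ, z.coeff ((n : ℤ) + 1) = w.coeff ((n : ℤ) + 1)) : z = w := by
  ext k
  rcases le_or_gt k 0 with hk | hk
  · obtain ⟨n, rfl⟩ : ∃ n : ℕ, k = -(n : ℤ) := ⟨k.natAbs, by omega⟩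
    exact hneg n
  · obtain ⟨n, rfl⟩ : ∃ n : ℕ, k = (n : ℤ) + 1 := ⟨(k - 1).toNat, by omega⟩
    exact hsucc n

lemma bijective_coprod_polyToLaurent_psToLaurentShift :
    Function.Bijective (polyToLaurent.coprod (psToLaurentShift (Λ := Λ))) := by
  refine ⟨(injective_iff_map_eq_zero _).mpr fun ⟨P, q⟩ h => ?_, fun z => ?_⟩
  · rw [coprod_apply] at h
    have hP : P = 0 := Polynomial.ext fun n => by
      simpa [coeff_polyToLaurent_neg, coeff_psToLaurentShift_neg] using
        congrArg (HahnSeries.coeff · (-(n : ℤ))) h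
    have hq : q = 0 := PowerSeries.ext fun n => by
      simpa [coeff_polyToLaurent_succ, coeff_psToLaurentShift_succ] using
        congrArg (HahnSeries.coeff · ((n : ℤ) + 1)) h
    rw [hP, hq, Prod.mk_zero_zero]
  · let P : Polynomial Λ := ⟨AddMonoidAlgebra.ofCoeff <|
      Finsupp.ofSupportFinite (fun n : ℕ => z.coeff (-(n : ℤ)))
        (headSupport_finite (fun _ => (LinearMap.id : Λ →ₗ[Λ] Λ)) z)⟩
    refine ⟨(P, PowerSeries.mk fun n => z.coeff ((n : ℤ) + 1)),
      LaurentSeries.ext_of_coeff_neg_of_coeff_succ (fun n => ?_) (fun n => ?_)⟩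
    · simp [P, coeff_polyToLaurent_neg, coeff_psToLaurentShift_neg, Polynomial.coeff_ofFinsupp,
        Finsupp.ofSupportFinite_coe]
    · simp [coeff_polyToLaurent_succ, coeff_psToLaurentShift_succ]

def laurentSplit : (Polynomial Λ × PowerSeries Λ) ≃ₗ[Λ] LaurentSeries Λ :=
  LinearEquiv.ofBijective _ bijective_coprod_polyToLaurent_psToLaurentShift

lemma laurentSplit_apply (P : Polynomial Λ) (q : PowerSeries Λ) :
    laurentSplit (P, q) = polyToLaurent P + psToLaurentShift q :=
  rfl

lemma imap_laurentSplit (F : FloerDatum Λ V) (P : Polynomial Λ) (q : PowerSeries Λ) :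
    imap F (laurentSplit (P, q)) = (F.polyD₂ P, q) := by
  refine Prod.ext ?_ (PowerSeries.ext fun n => ?_)
  · have hcoeff : ∀ n : ℕ, (laurentSplit (P, q)).coeff (-(n : ℤ)) = P.coeff n := fun n => by
      simp [laurentSplit_apply, coeff_polyToLaurent_neg, coeff_psToLaurentShift_neg]
    show ∑ᶠ n : ℕ, ((F.U ^ n) ∘ₗ F.D₂) ((laurentSplit (P, q)).coeff (-(n : ℤ))) = F.polyD₂ P
    simp_rw [hcoeff]
    rw [F.polyD₂_apply, finsum_eq_finsetSum_of_support_subset]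
    · rfl
    · intro n hn
      contrapose! hn
      simp [Polynomial.notMem_support_iff.mp hn]
  · show PowerSeries.coeff n (toPS (fun n => lcoeff ((n : ℤ) + 1)) (laurentSplit (P, q))) = _
    rw [coeff_toPS]
    change (laurentSplit (P, q)).coeff ((n : ℤ) + 1) = _
    simp [laurentSplit_apply, coeff_polyToLaurent_succ, coeff_psToLaurentShift_succ]

lemma pmap_eq_laurentSplit (F : FloerDatum Λ V) (α : V) (P : Polynomial Λ) :
    pmap F (α, P) = laurentSplit (P, F.seriesD₁ α) :=
  add_comm _ _

/-- Since `ď ∘ i = 0`, `j ∘ ď = d̂ ∘ j` and `p ∘ d̂ = 0`, the maps `i`, `j`, `p` induce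
`Λ`-linear maps `i⁎ : C̄ → Ȟ`, `j⁎ : Ȟ → Ĥ`, `p⁎ : Ĥ → C̄` (the homology of `(C̄, 0)` being
`C̄` itself), and these form an exact triangle. -/
theorem stmt_6 (F : FloerDatum Λ V) :
    ∃ (istar : LaurentSeries Λ →ₗ[Λ] CheckHomology F)
      (jstar : CheckHomology F →ₗ[Λ] HatHomology F)
      (pstar : HatHomology F →ₗ[Λ] LaurentSeries Λ),
      (∀ (z : LaurentSeries Λ) (hz : imap F z ∈ LinearMap.ker (checkd F)),
        istar z = Submodule.Quotient.mk (⟨imap F z, hz⟩ : LinearMap.ker (checkd F))) ∧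
      (∀ (w : LinearMap.ker (checkd F)) (hw : jmap w.1 ∈ LinearMap.ker (hatd F)),
        jstar (Submodule.Quotient.mk w) =
          Submodule.Quotient.mk (⟨jmap w.1, hw⟩ : LinearMap.ker (hatd F))) ∧
      (∀ w : LinearMap.ker (hatd F), pstar (Submodule.Quotient.mk w) = pmap F w.1) ∧
      LinearMap.range istar = LinearMap.ker jstar ∧
      LinearMap.range jstar = LinearMap.ker pstar ∧
      LinearMap.range pstar = LinearMap.ker istar := by
  have hi := imap_laurentSplit F
  have hp := pmap_eq_laurentSplit F
  have hi0 : checkd F ∘ₗ imap F = 0 :=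
    checkDiff_comp_eq_zero laurentSplit F.d_comp_polyD₂ F.seriesD₁_comp_polyD₂ hi
  have hp0 : pmap F ∘ₗ hatd F = 0 :=
    comp_hatDiff_eq_zero laurentSplit F.seriesD₁_comp_d F.seriesD₁_comp_polyD₂ hp
  exact ⟨toHomology _ _ hi0, homologyMap _ _ jmap (hatDiff_comp_fst_prod_zero _ _ _),
    fromHomology _ _ hp0, fun _ _ => rfl, fun _ _ => rfl, fun _ => rfl,
    range_toHomology_eq_ker_homologyMap laurentSplit hi0 hi,
    range_homologyMap_eq_ker_fromHomology laurentSplit hp0 hp,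
    range_fromHomology_eq_ker_toHomology laurentSplit hi0 hp0 hi hp⟩
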